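/- Let G be a graph on n vertices of tree-width at most w whose complement Ḡ is closed under the Bondy–Chvátal closure (for Hamiltonian paths). Then Ḡ contains a clique on at least n − 2(w² + w) vertices; equivalently, there is a set S of at most 2(w² + w) vertices such that the vertices outside S are pairwise adjacent in Ḡ. -/

import Mathlib

/-!
Root the decomposition tree at a node `r` and order the vertices of `G` by the depth of the
highest bag containing them. Since the bags containing a vertex form a subtree, every earlier
neighbour of `v` lies in the highest bag of `v`; hence `G` is `w`-degenerate and has at most
`w (n - 1)` edges. Closedness of `Gᶜ` says that every edge `uv` of `G` has
`deg u + deg v ≥ n - 1`, so the vertices of degree at least `(n - 1) / 2` cover the edges of `G`,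
and by the edge bound there are at most `4 w ≤ 2 (w² + w)` of them.
-/

/-- A tree decomposition of a graph `G` on vertex type `V`, indexed by the vertices of a
tree `T` on index type `ι`: every vertex of `G` lies in some bag, both endpoints of every
edge of `G` lie in some common bag, and for every vertex `v` the set of tree nodes whose
bag contains `v` induces a (connected) subtree of `T`. -/
structure TreeDecomp {V ι : Type} (G : SimpleGraph V) (T : SimpleGraph ι) where
  isTree : T.IsTree
  bag : ι → Finset V
  mem_bag : ∀ v : V, ∃ i : ι, v ∈ bag i
  edge_bag : ∀ u v : V, G.Adj u v → ∃ i : ι, u ∈ bag i ∧ v ∈ bag i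
  subtree : ∀ v : V, (T.induce {i : ι | v ∈ bag i}).Connected

open Finset Function

namespace SimpleGraph

section Tree

variable {ι : Type*} {T : SimpleGraph ι}

theorem IsAcyclic.eq_of_isPath (hT : T.IsAcyclic) {a b : ι} {p q : T.Walk a b}
    (hp : p.IsPath) (hq : q.IsPath) : p = q :=
  Subtype.mk.inj <| (hT.subsingleton_path a b).elim ⟨p, hp⟩ ⟨q, hq⟩

theorem IsAcyclic.concat_or_concat (hT : T.IsAcyclic) {r x y : ι} {p : T.Walk r x}
    {q : T.Walk r y} (hp : p.IsPath) (hq : q.IsPath) (hxy : T.Adj x y) :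
    q = p.concat hxy ∨ p = q.concat hxy.symm := by
  by_cases hy : y ∈ p.support
  · exact Or.inr (hT.path_concat hq hp hxy.symm hy)
  · exact Or.inl (hT.path_concat hp hq hxy
      (hT.mem_support_of_ne_mem_support_of_adj_of_isPath hq hp hxy.symm hy))

theorem IsTree.length_eq_dist (hT : T.IsTree) {a b : ι} {p : T.Walk a b} (hp : p.IsPath) :
    p.length = T.dist a b := by
  obtain ⟨q, hq, hlen⟩ := (hT.connected a b).exists_path_of_dist
  rw [hT.isAcyclic.eq_of_isPath hp hq, hlen]

theorem IsTree.dist_lt_of_mem_support (hT : T.IsTree) {r x y : ι} {p : T.Walk r x}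
    (hp : p.IsPath) (hy : y ∈ p.support) (hyx : y ≠ x) : T.dist r y < T.dist r x := by
  classical
  rw [← hT.length_eq_dist hp, ← hT.length_eq_dist (hp.takeUntil hy)]
  exact Walk.length_takeUntil_lt_length hy hyx

theorem Preconnected.exists_walk_support_subset {S : Set ι} (hS : (T.induce S).Preconnected)
    {a b : ι} (ha : a ∈ S) (hb : b ∈ S) : ∃ q : T.Walk a b, ∀ x ∈ q.support, x ∈ S := by
  obtain ⟨q⟩ := hS ⟨a, ha⟩ ⟨b, hb⟩
  refine ⟨q.map (Embedding.induce S).toHom, fun x hx => ?_⟩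
  obtain ⟨y, -, rfl⟩ := List.mem_map.1 (Walk.support_map _ q ▸ hx)
  exact y.2

theorem IsAcyclic.mem_of_mem_support_of_preconnected (hT : T.IsAcyclic) {S : Set ι}
    (hS : (T.induce S).Preconnected) {a b : ι} (ha : a ∈ S) (hb : b ∈ S) {p : T.Walk a b}
    (hp : p.IsPath) {x : ι} (hx : x ∈ p.support) : x ∈ S := by
  classical
  obtain ⟨q, hqS⟩ := hS.exists_walk_support_subset ha hb
  rw [hT.eq_of_isPath hp q.bypass_isPath] at hx
  exact hqS x (q.support_bypass_subset_support hx)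

theorem IsTree.mem_support_of_isMinOn (hT : T.IsTree) (r : ι) {S : Set ι}
    (hS : (T.induce S).Preconnected) {m j : ι} (hm : m ∈ S) (hmin : IsMinOn (T.dist r) S m)
    (hj : j ∈ S) {p : T.Walk r j} (hp : p.IsPath) : m ∈ p.support := by
  obtain ⟨q, hqS⟩ := hS.exists_walk_support_subset hj hm
  clear hj
  induction q with
  | nil => exact p.end_mem_support
  | @cons x y m hxy q ih =>
    obtain ⟨p', hp', -⟩ := (hT.connected r y).exists_path_of_dist
    have hmp' : m ∈ p'.support := ih hm hmin hp' fun z hz => hqS z (by simp [hz])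
    rcases hT.isAcyclic.concat_or_concat hp hp' hxy with rfl | rfl
    · rw [Walk.support_concat, List.mem_append, List.mem_singleton] at hmp'
      refine hmp'.resolve_right fun hmy => ?_
      subst hmy
      have hlt := hT.dist_lt_of_mem_support hp' (p.support_subset_support_concat hxy
        p.end_mem_support) hxy.ne
      exact absurd (isMinOn_iff.1 hmin x (hqS x (by simp))) (not_le.2 hlt)
    · exact p'.support_subset_support_concat _ hmp'

theorem IsTree.mem_of_isMinOn_of_dist_le (hT : T.IsTree) (r : ι) {S S' : Set ι}
    (hS : (T.induce S).Preconnected) (hS' : (T.induce S').Preconnected) {m m' j : ι}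
    (hm : m ∈ S) (hmin : IsMinOn (T.dist r) S m) (hm' : m' ∈ S')
    (hmin' : IsMinOn (T.dist r) S' m') (hjS : j ∈ S) (hjS' : j ∈ S')
    (hle : T.dist r m ≤ T.dist r m') : m' ∈ S := by
  classical
  obtain ⟨p, hp, -⟩ := (hT.connected r j).exists_path_of_dist
  have hmp := hT.mem_support_of_isMinOn r hS hm hmin hjS hp
  have hm'p := hT.mem_support_of_isMinOn r hS' hm' hmin' hjS' hp
  rw [← p.take_spec hmp, Walk.mem_support_append_iff] at hm'p
  rcases hm'p with hm'p | hm'p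
  · by_cases hm'm : m' = m
    · exact hm'm ▸ hm
    · exact absurd hle (not_le.2 (hT.dist_lt_of_mem_support (hp.takeUntil hmp) hm'p hm'm))
  · exact hT.isAcyclic.mem_of_mem_support_of_preconnected hS hm hjS (hp.dropUntil hmp) hm'p

end Tree

section Degeneracy

variable {V : Type*} [Fintype V] [DecidableEq V] {G : SimpleGraph V} [DecidableRel G.Adj]

theorem card_edgeFinset_le_of_card_lower_neighbors_le {α : Type*} [LinearOrder α] {f : V → α}
    (hf : Injective f) {k : ℕ} (hk : ∀ v, #{u ∈ G.neighborFinset v | f u < f v} ≤ k) :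
    #G.edgeFinset ≤ k * (Fintype.card V - 1) := by
  set lower : V → ℕ := fun v => #{u ∈ G.neighborFinset v | f u < f v}
  have hdegree : ∀ v, G.degree v = lower v + #{u ∈ G.neighborFinset v | f v < f u} := by
    intro v
    rw [← card_neighborFinset_eq_degree,
      ← card_filter_add_card_filter_not (s := G.neighborFinset v) (fun u => f u < f v)]
    congr 2
    refine filter_congr fun u hu => ?_
    have hne : f u ≠ f v := hf.ne (G.ne_of_adj ((mem_neighborFinset G v u).1 hu)).symm
    exact ⟨fun h => lt_of_le_of_ne (not_lt.1 h) hne.symm, fun h => not_lt.2 h.le⟩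
  have hupper : ∑ v, #{u ∈ G.neighborFinset v | f v < f u} = ∑ v, lower v := by
    simp only [lower, neighborFinset_eq_filter, filter_filter, card_filter]
    rw [Finset.sum_comm]
    simp only [G.adj_comm]
  have hedges : #G.edgeFinset = ∑ v, lower v := by
    have := G.sum_degrees_eq_twice_card_edges
    simp only [hdegree, sum_add_distrib, hupper] at this
    omega
  rcases isEmpty_or_nonempty V with hV | hV
  · simp [hedges]
  obtain ⟨v₀, hv₀⟩ := Finite.exists_min f
  have hlower₀ : lower v₀ = 0 :=
    card_eq_zero.2 (filter_eq_empty_iff.2 fun u _ => not_lt.2 (hv₀ u))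
  calc #G.edgeFinset = ∑ v ∈ univ.erase v₀, lower v := by rw [sum_erase _ hlower₀, hedges]
    _ ≤ #(univ.erase v₀) • k := sum_le_card_nsmul _ _ _ fun v _ => hk v
    _ = k * (Fintype.card V - 1) := by
      rw [card_erase_of_mem (mem_univ _), card_univ, smul_eq_mul, mul_comm]

end Degeneracy

section Closure

variable {V : Type*} [Fintype V] {G : SimpleGraph V} [DecidableRel G.Adj]

theorem card_le_degree_add_degree_add_one_of_adj [DecidableEq V]
    (hclosed : ∀ u v : V, u ≠ v → ¬ Gᶜ.Adj u v → Gᶜ.degree u + Gᶜ.degree v < Fintype.card V)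
    {u v : V} (huv : G.Adj u v) : Fintype.card V ≤ G.degree u + G.degree v + 1 := by
  have h := hclosed u v huv.ne fun h => ((compl_adj G u v).1 h).2 huv
  rw [degree_compl, degree_compl] at h
  have := G.degree_lt_card_verts u
  have := G.degree_lt_card_verts v
  omega

-- The positivity condition only matters when `Fintype.card V ≤ 1`.
variable (G) in
def highDegreeVerts : Finset V :=
  {v | 0 < G.degree v ∧ Fintype.card V ≤ 2 * G.degree v + 1}

theorem card_highDegreeVerts_le {k : ℕ} (hE : #G.edgeFinset ≤ k * (Fintype.card V - 1)) :
    #G.highDegreeVerts ≤ 4 * k := by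
  rcases Nat.lt_or_ge (Fintype.card V) 2 with hn | hn
  · have hempty : G.highDegreeVerts = ∅ := filter_eq_empty_iff.2 fun v _ ⟨hpos, _⟩ => by
      have := G.degree_lt_card_verts v
      omega
    simp [hempty]
  refine Nat.le_of_mul_le_mul_right ?_ (by omega : 0 < Fintype.card V - 1)
  calc #G.highDegreeVerts * (Fintype.card V - 1)
      = ∑ _v ∈ G.highDegreeVerts, (Fintype.card V - 1) := by rw [sum_const, smul_eq_mul]
    _ ≤ ∑ v ∈ G.highDegreeVerts, 2 * G.degree v :=
      sum_le_sum fun v hv => by have := (mem_filter.1 hv).2.2; omega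
    _ ≤ ∑ v, 2 * G.degree v := sum_le_sum_of_subset (subset_univ _)
    _ = 4 * #G.edgeFinset := by rw [← mul_sum, sum_degrees_eq_twice_card_edges]; ring
    _ ≤ 4 * k * (Fintype.card V - 1) := by rw [mul_assoc]; exact Nat.mul_le_mul_left 4 hE

theorem compl_adj_of_notMem_highDegreeVerts [DecidableEq V]
    (hclosed : ∀ u v : V, u ≠ v → ¬ Gᶜ.Adj u v → Gᶜ.degree u + Gᶜ.degree v < Fintype.card V)
    {u v : V} (hu : u ∉ G.highDegreeVerts) (hv : v ∉ G.highDegreeVerts) (huv : u ≠ v) :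
    Gᶜ.Adj u v := by
  refine (compl_adj G u v).2 ⟨huv, fun hadj => ?_⟩
  have := card_le_degree_add_degree_add_one_of_adj hclosed hadj
  have := (G.degree_pos_iff_exists_adj u).2 ⟨v, hadj⟩
  have := (G.degree_pos_iff_exists_adj v).2 ⟨u, hadj.symm⟩
  simp only [highDegreeVerts, mem_filter, mem_univ, true_and, not_and, not_le] at hu hv
  omega

end Closure

end SimpleGraph

namespace TreeDecomp

variable {V ι : Type} {G : SimpleGraph V} {T : SimpleGraph ι} (D : TreeDecomp G T)

noncomputable def top (r : ι) (v : V) : ι :=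
  argminOn (T.dist r) {i | v ∈ D.bag i} (D.mem_bag v)

theorem mem_bag_top (r : ι) (v : V) : v ∈ D.bag (D.top r v) :=
  argminOn_mem (T.dist r) {i | v ∈ D.bag i} (D.mem_bag v)

theorem isMinOn_top (r : ι) (v : V) : IsMinOn (T.dist r) {i | v ∈ D.bag i} (D.top r v) :=
  isMinOn_iff.2 fun _ hi => argminOn_le _ _ hi

theorem mem_bag_top_of_adj (r : ι) {u v : V} (huv : G.Adj u v)
    (hle : T.dist r (D.top r u) ≤ T.dist r (D.top r v)) : u ∈ D.bag (D.top r v) := by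
  obtain ⟨j, hju, hjv⟩ := D.edge_bag u v huv
  exact D.isTree.mem_of_isMinOn_of_dist_le r (D.subtree u).preconnected
    (D.subtree v).preconnected (D.mem_bag_top r u) (D.isMinOn_top r u) (D.mem_bag_top r v)
    (D.isMinOn_top r v) hju hjv hle

theorem card_edgeFinset_le [Fintype V] [DecidableEq V] [DecidableRel G.Adj] {w : ℕ}
    (hbag : ∀ i, #(D.bag i) ≤ w + 1) : #G.edgeFinset ≤ w * (Fintype.card V - 1) := by
  obtain ⟨r⟩ := D.isTree.connected.nonempty
  let key : V → ℕ ×ₗ Fin (Fintype.card V) :=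
    fun v => toLex (T.dist r (D.top r v), Fintype.equivFin V v)
  have hkey : Injective key := fun u v h =>
    (Fintype.equivFin V).injective (congrArg (fun k => (ofLex k).2) h)
  refine SimpleGraph.card_edgeFinset_le_of_card_lower_neighbors_le hkey fun v => ?_
  have hsub : {u ∈ G.neighborFinset v | key u < key v} ⊆ (D.bag (D.top r v)).erase v := by
    intro u hu
    rw [mem_filter, SimpleGraph.mem_neighborFinset] at hu
    refine mem_erase.2 ⟨hu.1.ne.symm, D.mem_bag_top_of_adj r hu.1.symm ?_⟩
    rcases Prod.Lex.lt_iff.1 hu.2 with h | h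
    exacts [h.le, h.1.le]
  calc _ ≤ #((D.bag (D.top r v)).erase v) := card_le_card hsub
    _ ≤ w := by
      rw [card_erase_of_mem (D.mem_bag_top r v)]
      have := hbag (D.top r v)
      omega

end TreeDecomp

/-- Let `G` be a graph on `n` vertices of tree-width at most `w` (i.e. `G`
admits a tree decomposition all of whose bags have size at most `w + 1`) whose complement
`Gᶜ` is closed under the Bondy–Chvátal closure for Hamiltonian paths (any two distinct
non-adjacent vertices `u, v` of `Gᶜ` satisfy `deg_{Gᶜ}(u) + deg_{Gᶜ}(v) < n`).  Then `Gᶜ`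
contains a clique on at least `n − 2(w² + w)` vertices: there is a set `S` of at most
`2(w² + w)` vertices such that the vertices outside `S` are pairwise adjacent in `Gᶜ`. -/
theorem stmt1 {V : Type} [Fintype V] [DecidableEq V] (G : SimpleGraph V)
    [DecidableRel G.Adj] (w : ℕ)
    (htw : ∃ (ι : Type) (_ : Fintype ι) (T : SimpleGraph ι) (D : TreeDecomp G T),
      ∀ i : ι, (D.bag i).card ≤ w + 1)
    (hclosed : ∀ u v : V, u ≠ v → ¬ Gᶜ.Adj u v →
      Gᶜ.degree u + Gᶜ.degree v < Fintype.card V) :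
    ∃ S : Finset V, S.card ≤ 2 * (w ^ 2 + w) ∧
      ∀ u v : V, u ∉ S → v ∉ S → u ≠ v → Gᶜ.Adj u v := by
  obtain ⟨ι, -, T, D, hbag⟩ := htw
  refine ⟨G.highDegreeVerts, ?_, fun u v hu hv huv =>
    SimpleGraph.compl_adj_of_notMem_highDegreeVerts hclosed hu hv huv⟩
  calc #G.highDegreeVerts ≤ 4 * w :=
        SimpleGraph.card_highDegreeVerts_le (D.card_edgeFinset_le hbag)
    _ ≤ 2 * (w ^ 2 + w) := by nlinarith
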